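/- (Accuracy guarantee of the embedding update) Let α ∈ (0,1), let P be a column-stochastic n×n real matrix, let x, r ∈ ℝⁿ with |r_u| ≤ ε for every coordinate u, and set ĥ := α(I − (1−α)P)^{-1}(x − r) and z := α(I − (1−α)P)^{-1} x. Then ‖ĥ − z‖₁ ≤ nε, where ‖v‖₁ = Σ_i |v_i|. -/
import Mathlib


open Matrix

/-- The ℓ1 norm of a real vector: `‖v‖₁ = ∑ i, |v i|`. -/
noncomputable def vecL1 {n : ℕ} (v : Fin n → ℝ) : ℝ := ∑ i, |v i|

lemma vecL1_mulVec_le {n : ℕ} (P : Matrix (Fin n) (Fin n) ℝ)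
    (hnonneg : ∀ i j, 0 ≤ P i j) (hcol : ∀ j, ∑ i, P i j = 1)
    (w : Fin n → ℝ) : vecL1 (P *ᵥ w) ≤ vecL1 w := by
  unfold vecL1
  calc ∑ i, |(P *ᵥ w) i| ≤ ∑ i, ∑ j, P i j * |w j| := by
        apply Finset.sum_le_sum
        intro i _
        calc |(P *ᵥ w) i| = |∑ j, P i j * w j| := rfl
          _ ≤ ∑ j, |P i j * w j| := Finset.abs_sum_le_sum_abs _ _
          _ = ∑ j, P i j * |w j| := by
              apply Finset.sum_congr rfl
              intro j _
              rw [abs_mul, abs_of_nonneg (hnonneg i j)]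
    _ = ∑ j, (∑ i, P i j) * |w j| := by
        rw [Finset.sum_comm]
        simp [Finset.sum_mul]
    _ = ∑ j, |w j| := by simp [hcol]

/-- **Accuracy guarantee of the embedding update.** Let `α ∈ (0,1)`, let `P` be a
column-stochastic `n × n` real matrix, let `x, r ∈ ℝⁿ` with `|r u| ≤ ε` for every
coordinate `u`, and set `ĥ := α (I - (1-α)P)⁻¹ (x - r)` and `z := α (I - (1-α)P)⁻¹ x`.
Then `‖ĥ - z‖₁ ≤ n ε`. -/
theorem embedding_update_accuracy {n : ℕ} (α ε : ℝ)
    (hα : α ∈ Set.Ioo (0 : ℝ) 1)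
    (P : Matrix (Fin n) (Fin n) ℝ)
    (hnonneg : ∀ i j, 0 ≤ P i j)
    (hcol : ∀ j, ∑ i, P i j = 1)
    (x r : Fin n → ℝ)
    (hr : ∀ u, |r u| ≤ ε)
    (hhat z : Fin n → ℝ)
    (hhat_def : hhat = (α • (1 - (1 - α) • P)⁻¹) *ᵥ (x - r))
    (hz_def : z = (α • (1 - (1 - α) • P)⁻¹) *ᵥ x) :
    vecL1 (hhat - z) ≤ (n : ℝ) * ε := by
  obtain ⟨hα0, hα1⟩ := hα
  set M : Matrix (Fin n) (Fin n) ℝ := 1 - (1 - α) • P with hM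
  have hεn : 0 ≤ (n : ℝ) * ε := by
    rcases Nat.eq_zero_or_pos n with h0 | hpos
    · simp [h0]
    · have : 0 ≤ ε := le_trans (abs_nonneg _) (hr ⟨0, hpos⟩)
      positivity
  -- hhat - z = α • (M⁻¹ *ᵥ (-r))
  have key : hhat - z = α • (M⁻¹ *ᵥ (-r)) := by
    subst hhat_def hz_def
    ext i
    simp [smul_mulVec, mulVec_sub, Pi.smul_apply, smul_eq_mul, mul_sub,
      mulVec_neg]
  by_cases hdet : IsUnit M.det
  · set w : Fin n → ℝ := M⁻¹ *ᵥ r with hw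
    have hMw : M *ᵥ w = r := by
      rw [hw, mulVec_mulVec, mul_nonsing_inv M hdet, one_mulVec]
    have hweq : w = r + (1 - α) • (P *ᵥ w) := by
      have : M *ᵥ w = w - (1 - α) • (P *ᵥ w) := by
        rw [hM, sub_mulVec, one_mulVec, smul_mulVec]
      rw [this] at hMw
      rw [← hMw]; ring_nf
    have hrL1 : vecL1 r ≤ (n : ℝ) * ε := by
      unfold vecL1
      calc ∑ i, |r i| ≤ ∑ _i : Fin n, ε := Finset.sum_le_sum fun i _ => hr i
        _ = (n : ℝ) * ε := by simp [mul_comm]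
    have hwbound : α * vecL1 w ≤ (n : ℝ) * ε := by
      have h1 : vecL1 w ≤ vecL1 r + (1 - α) * vecL1 w := by
        unfold vecL1
        calc ∑ i, |w i| = ∑ i, |r i + (1 - α) * (P *ᵥ w) i| := by
              apply Finset.sum_congr rfl; intro i _
              conv_lhs => rw [hweq]
              rw [Pi.add_apply, Pi.smul_apply, smul_eq_mul]
          _ ≤ ∑ i, (|r i| + (1 - α) * |(P *ᵥ w) i|) := by
              apply Finset.sum_le_sum; intro i _
              calc |r i + (1 - α) * (P *ᵥ w) i| ≤ |r i| + |(1 - α) * (P *ᵥ w) i| :=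
                    abs_add_le _ _
                _ = |r i| + (1 - α) * |(P *ᵥ w) i| := by
                    rw [abs_mul, abs_of_nonneg (show (0:ℝ) ≤ 1 - α by linarith)]
          _ = (∑ i, |r i|) + (1 - α) * ∑ i, |(P *ᵥ w) i| := by
              rw [Finset.sum_add_distrib, Finset.mul_sum]
          _ ≤ (∑ i, |r i|) + (1 - α) * ∑ i, |w i| := by
              have := vecL1_mulVec_le P hnonneg hcol w
              unfold vecL1 at this
              nlinarith
      nlinarith
    have hL1 : vecL1 (hhat - z) = α * vecL1 w := by
      rw [key]
      unfold vecL1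
      rw [Finset.mul_sum]
      apply Finset.sum_congr rfl
      intro i _
      have : M⁻¹ *ᵥ (-r) = -w := by rw [hw, mulVec_neg]
      rw [this]
      simp [abs_mul, abs_of_pos hα0]
    rw [hL1]; exact hwbound
  · rw [key, nonsing_inv_apply_not_isUnit M hdet]
    simp [vecL1, hεn]
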